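/- arXiv:2106.15966 — 2 statements merged into one kernel-verified Lean document; each statement's English description precedes it below -/
import Mathlib

section
/- Let μ > 0 and let F ∈ C³(ℝ, ℂ) with F′(0) = 0 and F″(0) = 0. Then for all x, y ∈ ℝ: F(μ|x−y|) = F(μ|x|) − μ y · sgn(x) F′(μ|x|) + (μ² y²/2) F″(μ|x|) − (μ³ y³/2) ∫₀¹ (1−θ)² (sgn(x−θy))³ F‴(μ|x−θy|) dθ. -/
/-!
Put `G s = F |s|`. Because `F'(0) = 0`, `G` is differentiable with `G' s = sgn s • F'(|s|)`;
this odd extension of `F'` vanishes at `0`, so it is differentiable too, with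
`G'' s = F''(|s|)` continuous, and `G''` has derivative `sgn s • F'''(|s|)` off `s = 0`.
Taylor's formula with integral remainder only needs `G''` to be differentiable off a countable
set (the fundamental theorem of calculus in that form), which gives the expansion for `μ = 1`;
scaling by `μ > 0` commutes with `|·|` and `sgn`.
-/

open MeasureTheory Set Filter Topology

namespace Real

lemma sign_eq_cast_sign (r : ℝ) : Real.sign r = (SignType.sign r : ℝ) := by
  rcases lt_trichotomy r 0 with h | rfl | h <;> simp [sign_of_neg, sign_of_pos, *]

lemma sign_mul_abs (r : ℝ) : Real.sign r * |r| = r := by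
  rw [sign_eq_cast_sign, _root_.sign_mul_abs]

lemma abs_sign_le_one (r : ℝ) : |Real.sign r| ≤ 1 := by
  rcases sign_apply_eq r with h | h | h <;> simp [h]

lemma sign_mul_self_of_ne_zero {r : ℝ} (hr : r ≠ 0) : Real.sign r * Real.sign r = 1 := by
  rcases sign_apply_eq_of_ne_zero r hr with h | h <;> simp [h]

lemma sign_pow_three (r : ℝ) : Real.sign r ^ 3 = Real.sign r := by
  rcases sign_apply_eq r with h | h | h <;> norm_num [h]

lemma sign_mul_of_pos {c : ℝ} (hc : 0 < c) (r : ℝ) : Real.sign (c * r) = Real.sign r := by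
  simp [sign_eq_cast_sign, _root_.sign_mul, _root_.sign_pos hc]

lemma eventually_sign_eq {s : ℝ} (hs : s ≠ 0) : ∀ᶠ t in 𝓝 s, Real.sign t = Real.sign s := by
  simp only [sign_eq_cast_sign]
  filter_upwards [(continuousAt_sign_of_ne_zero hs).eventually_mem
    ((isOpen_discrete {SignType.sign s}).mem_nhds rfl)] with t ht
  rw [ht]

lemma measurable_sign : Measurable Real.sign := by
  unfold Real.sign
  exact Measurable.ite measurableSet_Iio measurable_const
    (Measurable.ite measurableSet_Ioi measurable_const measurable_const)

end Real

section

variable {E : Type*} [NormedAddCommGroup E] [NormedSpace ℝ E]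

lemma IntervalIntegrable.sign_comp_smul {f : ℝ → E} {u : ℝ → ℝ} {μ : Measure ℝ} {a b : ℝ}
    (hf : IntervalIntegrable f μ a b) (hu : Measurable u) :
    IntervalIntegrable (fun t => Real.sign (u t) • f t) μ a b := by
  have hbdd : ∀ᵐ t ∂μ, ‖Real.sign (u t)‖ ≤ 1 := ae_of_all _ fun t => Real.abs_sign_le_one _
  have hmeas := (Real.measurable_sign.comp hu).aestronglyMeasurable (μ := μ)
  exact ⟨hf.1.bdd_smul 1 hmeas.restrict (ae_restrict_of_ae hbdd),
    hf.2.bdd_smul 1 hmeas.restrict (ae_restrict_of_ae hbdd)⟩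

variable {f : ℝ → E} {f' : E} {s : ℝ}

lemma HasDerivAt.isLittleO_comp_abs (hf : HasDerivAt f f' 0) :
    (fun t => f |t| - f 0 - |t| • f') =o[𝓝 0] fun t => t := by
  have := (hasDerivAt_iff_isLittleO_nhds_zero.mp hf).comp_tendsto
    (continuous_abs.tendsto' 0 0 abs_zero)
  exact Asymptotics.isLittleO_abs_right.mp (by simpa [Function.comp_def] using this)

theorem HasDerivAt.comp_abs (hf : HasDerivAt f f' |s|) (h0 : s = 0 → f' = 0) :
    HasDerivAt (fun t => f |t|) (Real.sign s • f') s := by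
  rcases eq_or_ne s 0 with rfl | hs
  · rw [abs_zero, h0 rfl] at hf
    rw [h0 rfl, smul_zero, hasDerivAt_iff_isLittleO_nhds_zero]
    simpa using hf.isLittleO_comp_abs
  · rw [Real.sign_eq_cast_sign]
    exact hf.scomp s (hasDerivAt_abs hs)

theorem HasDerivAt.sign_smul_comp_abs (hf : HasDerivAt f f' |s|) (h0 : f 0 = 0) :
    HasDerivAt (fun t => Real.sign t • f |t|) f' s := by
  rcases eq_or_ne s 0 with rfl | hs
  · rw [abs_zero] at hf
    rw [hasDerivAt_iff_isLittleO_nhds_zero]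
    refine (Asymptotics.isBigO_of_le _ fun t => ?_).trans_isLittleO hf.isLittleO_comp_abs
    have hodd : Real.sign t • f |t| - t • f' = Real.sign t • (f |t| - f 0 - |t| • f') := by
      rw [h0, sub_zero, smul_sub, smul_smul, Real.sign_mul_abs]
    simpa [hodd, norm_smul] using
      mul_le_of_le_one_left (norm_nonneg _) (Real.abs_sign_le_one t)
  · have := (hf.comp_abs (absurd · hs)).const_smul (Real.sign s)
    rw [smul_smul, Real.sign_mul_self_of_ne_zero hs, one_smul] at this
    exact this.congr_of_eventuallyEq ((Real.eventually_sign_eq hs).mono fun t ht => by simp [ht])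

variable [CompleteSpace E]

theorem taylor_integral_remainder_two {g g₁ g₂ g₃ : ℝ → E} {S : Set ℝ}
    (hS : S.Countable) (hg : ∀ t, HasDerivAt g (g₁ t) t) (hg₁ : ∀ t, HasDerivAt g₁ (g₂ t) t)
    (hg₂c : Continuous g₂) (hg₂ : ∀ t ∈ Ioo 0 1 \ S, HasDerivAt g₂ (g₃ t) t)
    (hg₃ : IntervalIntegrable g₃ volume 0 1) :
    g 1 = g 0 + g₁ 0 + (1 / 2 : ℝ) • g₂ 0 + ∫ θ in (0:ℝ)..1, ((1 - θ) ^ 2 / 2) • g₃ θ := by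
  -- `h θ` is the Taylor polynomial of `g` at `θ`, evaluated at `1`; its derivative telescopes.
  set h : ℝ → E := fun θ => g θ + (1 - θ) • g₁ θ + ((1 - θ) ^ 2 / 2) • g₂ θ with h_def
  have hc : Continuous h := by
    have hgc := continuous_iff_continuousAt.2 fun t => (hg t).continuousAt
    have hg₁c := continuous_iff_continuousAt.2 fun t => (hg₁ t).continuousAt
    fun_prop
  have hd : ∀ θ ∈ Ioo (0:ℝ) 1 \ S, HasDerivAt h (((1 - θ) ^ 2 / 2) • g₃ θ) θ := by
    intro θ hθ
    have hc1 : HasDerivAt (fun θ : ℝ => 1 - θ) (-1) θ := by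
      simpa using (hasDerivAt_id θ).const_sub 1
    have hc2 : HasDerivAt (fun θ : ℝ => (1 - θ) ^ 2 / 2) (-(1 - θ)) θ :=
      ((hc1.pow 2).div_const 2).congr_deriv (by ring)
    exact (((hg θ).add (hc1.smul (hg₁ θ))).add (hc2.smul (hg₂ θ hθ))).congr_deriv (by module)
  rw [integral_eq_of_hasDerivAt_off_countable_of_le h _ zero_le_one hS hc.continuousOn hd
    (hg₃.continuousOn_smul (by fun_prop))]
  simp only [h_def]
  module

theorem taylor_integral_remainder_two_sub {G G₁ G₂ G₃ : ℝ → E} {S : Set ℝ}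
    (hS : S.Countable) (hG : ∀ t, HasDerivAt G (G₁ t) t) (hG₁ : ∀ t, HasDerivAt G₁ (G₂ t) t)
    (hG₂c : Continuous G₂) (hG₂ : ∀ t ∉ S, HasDerivAt G₂ (G₃ t) t) (x y : ℝ)
    (hG₃ : IntervalIntegrable (fun θ => G₃ (x - θ * y)) volume 0 1) :
    G (x - y) = G x - y • G₁ x + (y ^ 2 / 2) • G₂ x -
      (y ^ 3 / 2) • ∫ θ in (0:ℝ)..1, (1 - θ) ^ 2 • G₃ (x - θ * y) := by
  rcases eq_or_ne y 0 with rfl | hy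
  · simp
  have hl : ∀ θ, HasDerivAt (fun θ : ℝ => x - θ * y) (-y) θ :=
    fun θ => (hasDerivAt_mul_const y).const_sub x
  have hS' : ((fun θ : ℝ => x - θ * y) ⁻¹' S).Countable :=
    hS.preimage fun a b hab => mul_right_cancel₀ hy (sub_right_injective hab)
  have key := taylor_integral_remainder_two hS'
    (fun θ => (hG _).scomp θ (hl θ)) (fun θ => ((hG₁ _).scomp θ (hl θ)).const_smul (-y))
    (by fun_prop)
    (fun θ hθ => (((hG₂ _ hθ.2).scomp θ (hl θ)).const_smul (-y)).const_smul (-y))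
    (((hG₃.smul (-y)).smul (-y)).smul (-y))
  have hint : ∫ θ in (0:ℝ)..1, ((1 - θ) ^ 2 / 2) • (-y) • (-y) • (-y) • G₃ (x - θ * y) =
      -(y ^ 3 / 2) • ∫ θ in (0:ℝ)..1, (1 - θ) ^ 2 • G₃ (x - θ * y) := by
    rw [← intervalIntegral.integral_smul]
    congr 1 with θ
    module
  simp only [hint, Function.comp_apply, one_mul, zero_mul, sub_zero] at key
  rw [key]
  module

theorem taylor_integral_remainder_two_comp_abs {F : ℝ → E} (hF : ContDiff ℝ 3 F)
    (h₁ : deriv F 0 = 0) (x y : ℝ) :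
    F |x - y| = F |x| - (y * Real.sign x) • deriv F |x| + (y ^ 2 / 2) • deriv (deriv F) |x| -
      (y ^ 3 / 2) • ∫ θ in (0:ℝ)..1,
        (1 - θ) ^ 2 • Real.sign (x - θ * y) • deriv (deriv (deriv F)) |x - θ * y| := by
  obtain ⟨hd, -, hF₁⟩ := contDiff_succ_iff_deriv.mp (show ContDiff ℝ (2 + 1) F from hF)
  obtain ⟨hd₁, -, hF₂⟩ := contDiff_succ_iff_deriv.mp (show ContDiff ℝ (1 + 1) _ from hF₁)
  obtain ⟨hd₂, -, hF₃⟩ := contDiff_succ_iff_deriv.mp (show ContDiff ℝ (0 + 1) _ from hF₂)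
  have hI : IntervalIntegrable
      (fun θ => Real.sign (x - θ * y) • deriv (deriv (deriv F)) |x - θ * y|) volume 0 1 :=
    ((hF₃.continuous.comp (by fun_prop)).intervalIntegrable 0 1).sign_comp_smul (by fun_prop)
  rw [taylor_integral_remainder_two_sub (countable_singleton 0)
    (fun t => (hd |t|).hasDerivAt.comp_abs fun ht => by simpa [ht] using h₁)
    (fun t => (hd₁ |t|).hasDerivAt.sign_smul_comp_abs h₁)
    (hF₂.continuous.comp continuous_abs)
    (fun t ht => (hd₂ |t|).hasDerivAt.comp_abs (absurd · ht)) x y hI, mul_smul]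

end

theorem stmt5_general
    (μ : ℝ) (hμ : 0 < μ)
    (F : ℝ → ℂ) (hF : ContDiff ℝ 3 F)
    (hF'0 : deriv F 0 = 0)
    (x y : ℝ) :
    F (μ * |x - y|) =
      F (μ * |x|) - ((μ * y * Real.sign x : ℝ) : ℂ) * deriv F (μ * |x|) +
        ((μ ^ 2 * y ^ 2 / 2 : ℝ) : ℂ) * deriv (deriv F) (μ * |x|) -
        ((μ ^ 3 * y ^ 3 / 2 : ℝ) : ℂ) *
          ∫ θ in (0:ℝ)..1,
            (((1 - θ) ^ 2 * (Real.sign (x - θ * y)) ^ 3 : ℝ) : ℂ) *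
              deriv (deriv (deriv F)) (μ * |x - θ * y|) := by
  have habs (z : ℝ) : |μ * z| = μ * |z| := by rw [abs_mul, abs_of_pos hμ]
  have hsub (θ : ℝ) : μ * x - θ * (μ * y) = μ * (x - θ * y) := by ring
  have hrescale : ∫ θ in (0:ℝ)..1, (1 - θ) ^ 2 • Real.sign (μ * x - θ * (μ * y)) •
        deriv (deriv (deriv F)) |μ * x - θ * (μ * y)| =
      ∫ θ in (0:ℝ)..1, (((1 - θ) ^ 2 * (Real.sign (x - θ * y)) ^ 3 : ℝ) : ℂ) *
        deriv (deriv (deriv F)) (μ * |x - θ * y|) := by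
    refine intervalIntegral.integral_congr fun θ _ => ?_
    simp only [hsub, habs, Real.sign_mul_of_pos hμ, Real.sign_pow_three, Complex.real_smul]
    push_cast
    ring
  have h := taylor_integral_remainder_two_comp_abs hF hF'0 (μ * x) (μ * y)
  rw [← mul_sub, habs, habs, Real.sign_mul_of_pos hμ, hrescale] at h
  rw [h]
  simp only [Complex.real_smul]
  push_cast
  ring

/-- Lemma 2.4 (iii): third-order Taylor-type expansion of
`F(μ|x−y|)` around `μ|x|`, valid for `F ∈ C³(ℝ, ℂ)` with `F′(0) = F″(0) = 0`:
`F(μ|x−y|) = F(μ|x|) − μ y sgn(x) F′(μ|x|) + (μ²y²/2) F″(μ|x|)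
  − (μ³y³/2) ∫₀¹ (1−θ)² (sgn(x−θy))³ F‴(μ|x−θy|) dθ`. -/
theorem stmt5
    (μ : ℝ) (hμ : 0 < μ)
    (F : ℝ → ℂ) (hF : ContDiff ℝ 3 F)
    (hF'0 : deriv F 0 = 0) (hF''0 : deriv (deriv F) 0 = 0)
    (x y : ℝ) :
    F (μ * |x - y|) =
      F (μ * |x|) - ((μ * y * Real.sign x : ℝ) : ℂ) * deriv F (μ * |x|) +
        ((μ ^ 2 * y ^ 2 / 2 : ℝ) : ℂ) * deriv (deriv F) (μ * |x|) -
        ((μ ^ 3 * y ^ 3 / 2 : ℝ) : ℂ) *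
          ∫ θ in (0:ℝ)..1,
            (((1 - θ) ^ 2 * (Real.sign (x - θ * y)) ^ 3 : ℝ) : ℂ) *
              deriv (deriv (deriv F)) (μ * |x - θ * y|) :=
  stmt5_general μ hμ F hF hF'0 x y
end

section
/- Let V : ℝ → ℝ be measurable with |V(x)| ≤ C₀(1+|x|)^{−β} for some β > 13 and C₀ > 0, and set v = |V|^{1/2}. With a⁺ = (−1+i)/4, a₋₁⁺ = (−1−i)/8, a₁⁺ = (−1+i)/96, define E(μ; x, y) = R₀⁺(μ⁴)(x,y) − a⁺/μ³ − (a₋₁⁺/μ)|x−y|² − |x−y|³/12 − a₁⁺ μ |x−y|⁴. Then there exists C > 0 such that for all μ > 0: ( ∬_{ℝ²} |v(x) E(μ; x, y) v(y)|² dx dy )^{1/2} ≤ C μ³ and ( ∬_{ℝ²} |v(x) ∂_μ E(μ; x, y) v(y)|² dx dy )^{1/2} ≤ C μ². In other words, the operator M⁺(μ) = U + v R₀⁺(μ⁴) v equals (ã⁺/μ³) P + (a₋₁⁺/μ) v G₋₁ v + T₀ + a₁⁺ μ v G₁ v up to a Hilbert–Schmidt error of norm O(μ³) whose μ-derivative has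 Hilbert–Schmidt norm O(μ²). -/
/-!
With `r = |x - y|`, the error is `E(μ; x, y) = F(μ r) / (4 μ³)`, where
`F(w) = i R₆(i w) - R₆(-w)` and `R_n(z) = e^z - ∑_{m<n} z^m / m!` is the Taylor remainder of the
exponential: the coefficients `a⁺, a₋₁⁺, 1/12, a₁⁺` are exactly the ones that cancel the Taylor
terms of degree `≤ 5`. On the closed left half-plane `‖R_n(z)‖ ≤ ‖z‖ⁿ / n!`, which gives
`|E| ≲ μ³ r⁶` and `|∂_μ E| ≲ μ² r⁶`. As `r ≤ (1 + |x|)(1 + |y|)`, the squared kernels are then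
dominated by `w(x) w(y)` with `w(t) = C₀ (1 + |t|)^(12 - β)`, which is integrable because `β > 13`.
-/

open MeasureTheory Set ENNReal

/-- The error term `E(μ; x, y)` in the low-energy expansion of the free resolvent kernel
`R₀⁺(μ⁴)(x,y) = (i e^{iμ|x−y|} − e^{−μ|x−y|})/(4μ³)`, with
`a⁺ = (−1+i)/4`, `a₋₁⁺ = (−1−i)/8`, `a₁⁺ = (−1+i)/96`:
`E(μ;x,y) = R₀⁺(μ⁴)(x,y) − a⁺/μ³ − (a₋₁⁺/μ)|x−y|² − |x−y|³/12 − a₁⁺ μ |x−y|⁴`. -/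
noncomputable def resolventError (μ x y : ℝ) : ℂ :=
  (Complex.I * Complex.exp (Complex.I * (μ : ℂ) * ((|x - y| : ℝ) : ℂ)) -
      Complex.exp (-((μ : ℂ) * ((|x - y| : ℝ) : ℂ)))) / (4 * (μ : ℂ) ^ 3) -
    ((-1 + Complex.I) / 4) / (μ : ℂ) ^ 3 -
    ((-1 - Complex.I) / 8) / (μ : ℂ) * ((|x - y| : ℝ) : ℂ) ^ 2 -
    ((|x - y| : ℝ) : ℂ) ^ 3 / 12 -
    ((-1 + Complex.I) / 96) * (μ : ℂ) * ((|x - y| : ℝ) : ℂ) ^ 4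

lemma lintegral_lintegral_le_sq {α : Type*} [MeasurableSpace α] {μ : Measure α}
    {F : α → α → ℝ≥0∞} {a : α → ℝ≥0∞} (ha : AEMeasurable a μ) (hF : ∀ x y, F x y ≤ a x * a y) :
    ∫⁻ x, ∫⁻ y, F x y ∂μ ∂μ ≤ (∫⁻ x, a x ∂μ) ^ 2 :=
  calc ∫⁻ x, ∫⁻ y, F x y ∂μ ∂μ ≤ ∫⁻ x, ∫⁻ y, a x * a y ∂μ ∂μ :=
        lintegral_mono fun x => lintegral_mono fun y => hF x y
    _ = (∫⁻ x, a x ∂μ) ^ 2 := by rw [lintegral_lintegral_mul ha ha, sq]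

lemma abs_sub_le_one_add_abs_mul_one_add_abs (x y : ℝ) : |x - y| ≤ (1 + |x|) * (1 + |y|) := by
  nlinarith [abs_sub x y, abs_nonneg x, abs_nonneg y, mul_nonneg (abs_nonneg x) (abs_nonneg y)]

lemma integrable_const_mul_one_add_abs_rpow {γ : ℝ} (hγ : γ < -1) (c : ℝ) :
    Integrable (fun t : ℝ => c * (1 + |t|) ^ γ) := by
  have h := integrable_one_add_norm (E := ℝ) (μ := volume) (r := -γ) (by simp; linarith)
  simpa using h.const_mul c

lemma abs_mul_one_add_abs_pow_le {V : ℝ → ℝ} {β C₀ : ℝ}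
    (hV : ∀ x, |V x| ≤ C₀ * (1 + |x|) ^ (-β)) (k : ℕ) (x : ℝ) :
    |V x| * (1 + |x|) ^ k ≤ C₀ * (1 + |x|) ^ ((k : ℝ) - β) := by
  have hx : 0 < 1 + |x| := by positivity
  calc |V x| * (1 + |x|) ^ k ≤ C₀ * (1 + |x|) ^ (-β) * (1 + |x|) ^ k := by gcongr; exact hV x
    _ = C₀ * (1 + |x|) ^ ((k : ℝ) - β) := by
      rw [mul_assoc, ← Real.rpow_natCast, ← Real.rpow_add hx, neg_add_eq_sub]

theorem lintegral_sq_enorm_kernel_le {V v : ℝ → ℝ} {β C₀ A : ℝ} {k : ℕ} (hβ : 2 * k + 1 < β)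
    (hC₀ : 0 ≤ C₀) (hV : ∀ x, |V x| ≤ C₀ * (1 + |x|) ^ (-β)) (hv : ∀ x, v x = √|V x|)
    {K : ℝ → ℝ → ℂ} (hA : 0 ≤ A) (hK : ∀ x y, ‖K x y‖ ≤ A * |x - y| ^ k) :
    ∫⁻ x, ∫⁻ y, (‖(v x : ℂ) * K x y * (v y : ℂ)‖₊ : ℝ≥0∞) ^ 2 ≤
      ENNReal.ofReal (((∫ t, C₀ * (1 + |t|) ^ ((2 * k : ℕ) - β)) * A) ^ 2) := by
  set w : ℝ → ℝ := fun t => C₀ * (1 + |t|) ^ ((2 * k : ℕ) - β)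
  have hw_int : Integrable w := integrable_const_mul_one_add_abs_rpow (by push_cast; linarith) C₀
  have hpoint (x y : ℝ) : ‖(v x : ℂ) * K x y * (v y : ℂ)‖ ^ 2 ≤ (A * w x) * (A * w y) := by
    have hv_sq (t : ℝ) : ‖(v t : ℂ)‖ ^ 2 = |V t| := by
      rw [Complex.norm_real, Real.norm_eq_abs, sq_abs, hv, Real.sq_sqrt (abs_nonneg _)]
    have hK_sq : ‖K x y‖ ^ 2 ≤ A ^ 2 * ((1 + |x|) ^ (2 * k) * (1 + |y|) ^ (2 * k)) := by
      calc ‖K x y‖ ^ 2 ≤ (A * |x - y| ^ k) ^ 2 := by gcongr; exact hK x y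
        _ ≤ A ^ 2 * ((1 + |x|) * (1 + |y|)) ^ (2 * k) := by
          rw [mul_pow, ← pow_mul, mul_comm k]
          gcongr
          exact abs_sub_le_one_add_abs_mul_one_add_abs x y
        _ = A ^ 2 * ((1 + |x|) ^ (2 * k) * (1 + |y|) ^ (2 * k)) := by rw [mul_pow]
    calc ‖(v x : ℂ) * K x y * (v y : ℂ)‖ ^ 2 = |V x| * ‖K x y‖ ^ 2 * |V y| := by
          rw [norm_mul, norm_mul, mul_pow, mul_pow, hv_sq, hv_sq]
      _ ≤ |V x| * (A ^ 2 * ((1 + |x|) ^ (2 * k) * (1 + |y|) ^ (2 * k))) * |V y| := by gcongr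
      _ = A ^ 2 * (|V x| * (1 + |x|) ^ (2 * k)) * (|V y| * (1 + |y|) ^ (2 * k)) := by ring
      _ ≤ A ^ 2 * w x * w y := by
          gcongr
          · exact abs_mul_one_add_abs_pow_le hV _ x
          · exact abs_mul_one_add_abs_pow_le hV _ y
      _ = (A * w x) * (A * w y) := by ring
  calc ∫⁻ x, ∫⁻ y, (‖(v x : ℂ) * K x y * (v y : ℂ)‖₊ : ℝ≥0∞) ^ 2
      ≤ (∫⁻ t, ENNReal.ofReal (A * w t)) ^ 2 := by
        refine lintegral_lintegral_le_sq (by fun_prop) fun x y => ?_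
        rw [← ENNReal.ofReal_mul (by positivity), ← enorm_eq_nnnorm, ← ofReal_norm,
          ← ENNReal.ofReal_pow (norm_nonneg _)]
        exact ENNReal.ofReal_le_ofReal (hpoint x y)
    _ = ENNReal.ofReal (((∫ t, w t) * A) ^ 2) := by
        rw [mul_comm, ← integral_const_mul,
          ← ofReal_integral_eq_lintegral_ofReal (hw_int.const_mul A)
            (Filter.Eventually.of_forall fun t => by positivity),
          ENNReal.ofReal_pow (by positivity)]

open Complex Finset

noncomputable def expTaylorRemainder (n : ℕ) (z : ℂ) : ℂ :=
  exp z - ∑ m ∈ range n, z ^ m / m.factorial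

lemma expTaylorRemainder_zero (z : ℂ) : expTaylorRemainder 0 z = exp z := by
  simp [expTaylorRemainder]

lemma expTaylorRemainder_succ (n : ℕ) (z : ℂ) :
    expTaylorRemainder (n + 1) z = expTaylorRemainder n z - z ^ n / n.factorial := by
  rw [expTaylorRemainder, expTaylorRemainder, sum_range_succ]
  ring

lemma expTaylorRemainder_succ_zero (n : ℕ) : expTaylorRemainder (n + 1) 0 = 0 := by
  simp [expTaylorRemainder, sum_range_succ']

lemma hasDerivAt_expTaylorRemainder_succ (n : ℕ) (z : ℂ) :
    HasDerivAt (expTaylorRemainder (n + 1)) (expTaylorRemainder n z) z := by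
  induction n with
  | zero =>
    rw [funext (expTaylorRemainder_succ 0), expTaylorRemainder_zero]
    simpa [expTaylorRemainder_zero] using (hasDerivAt_exp z).sub_const 1
  | succ n ih =>
    rw [funext (expTaylorRemainder_succ (n + 1)), expTaylorRemainder_succ]
    refine (ih.sub ((hasDerivAt_pow (n + 1) z).div_const _)).congr_deriv ?_
    rw [Nat.factorial_succ, Nat.cast_mul, add_tsub_cancel_right]
    field_simp

/-- `t ↦ R_{n+1}(t z)` has derivative `z R_n(t z)`, and `t z` stays in the half-plane for `t ≥ 0`,
so the bound for `n` integrates over `[0, 1]` to the bound for `n + 1`. -/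
theorem norm_expTaylorRemainder_le {z : ℂ} (hz : z.re ≤ 0) (n : ℕ) :
    ‖expTaylorRemainder n z‖ ≤ ‖z‖ ^ n / n.factorial := by
  induction n generalizing z with
  | zero => simpa [expTaylorRemainder_zero, norm_exp] using hz
  | succ n ih =>
    have hderiv (t : ℝ) : HasDerivAt (fun t : ℝ => expTaylorRemainder (n + 1) (t * z))
        (expTaylorRemainder n (t * z) * z) t := by
      have hline : HasDerivAt (fun t : ℝ => (t : ℂ) * z) z t := by
        simpa using (hasDerivAt_id t).ofReal_comp.mul_const z
      exact (hasDerivAt_expTaylorRemainder_succ n _).comp t hline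
    have hbound (t : ℝ) : HasDerivAt (fun t : ℝ => (t * ‖z‖) ^ (n + 1) / (n + 1).factorial)
        ((t * ‖z‖) ^ n / n.factorial * ‖z‖) t := by
      refine (((hasDerivAt_id' t).mul_const ‖z‖).pow (n + 1) |>.div_const _).congr_deriv ?_
      rw [Nat.factorial_succ, Nat.cast_mul, add_tsub_cancel_right]
      field_simp
    have key := image_norm_le_of_norm_deriv_right_le_deriv_boundary (a := 0) (b := 1)
      (fun t _ => (hderiv t).continuousAt.continuousWithinAt)
      (fun t _ => (hderiv t).hasDerivWithinAt) (by simp [expTaylorRemainder_succ_zero]) hbound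
      (fun t ht => ?_) (right_mem_Icc.2 zero_le_one)
    · simpa using key
    · rw [norm_mul]
      gcongr
      refine (ih ?_).trans_eq ?_
      · simpa using mul_nonpos_of_nonneg_of_nonpos ht.1 hz
      · simp [abs_of_nonneg ht.1]

noncomputable def resolventProfile (w : ℂ) : ℂ :=
  I * expTaylorRemainder 6 (I * w) - expTaylorRemainder 6 (-w)

lemma resolventProfile_eq (w : ℂ) :
    resolventProfile w = I * exp (I * w) - exp (-w) -
      ((-1 + I) + (-1 - I) / 2 * w ^ 2 + w ^ 3 / 3 + (-1 + I) / 24 * w ^ 4) := by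
  simp only [resolventProfile, expTaylorRemainder, sum_range_succ, sum_range_zero, Nat.factorial]
  push_cast
  linear_combination
    (-w - I * w ^ 2 / 2 - (I ^ 2 - 1) * w ^ 3 / 6 - I * (I ^ 2 - 1) * w ^ 4 / 24 -
      (I ^ 4 - I ^ 2 + 1) * w ^ 5 / 120) * I_sq

lemma resolventError_eq {μ : ℝ} (hμ : μ ≠ 0) (x y : ℝ) :
    resolventError μ x y = resolventProfile ↑(μ * |x - y|) / (4 * (μ : ℂ) ^ 3) := by
  have hμ' : (μ : ℂ) ≠ 0 := ofReal_ne_zero.2 hμ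
  rw [resolventProfile_eq, resolventError]
  push_cast
  field_simp
  ring

noncomputable def resolventProfileDeriv (w : ℂ) : ℂ :=
  expTaylorRemainder 5 (-w) - expTaylorRemainder 5 (I * w)

lemma hasDerivAt_resolventProfile (w : ℂ) :
    HasDerivAt resolventProfile (resolventProfileDeriv w) w := by
  have hI := (hasDerivAt_expTaylorRemainder_succ 5 (I * w)).comp w ((hasDerivAt_id w).const_mul I)
  have hneg := (hasDerivAt_expTaylorRemainder_succ 5 (-w)).comp w (hasDerivAt_neg w)
  refine ((hI.const_mul I).sub hneg).congr_deriv ?_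
  rw [resolventProfileDeriv]
  linear_combination expTaylorRemainder 5 (I * w) * I_sq

lemma norm_expTaylorRemainder_I_mul_le (t : ℝ) (n : ℕ) :
    ‖expTaylorRemainder n (I * t)‖ ≤ |t| ^ n / n.factorial := by
  simpa using norm_expTaylorRemainder_le (z := I * t) (by simp) n

lemma norm_expTaylorRemainder_neg_le {t : ℝ} (ht : 0 ≤ t) (n : ℕ) :
    ‖expTaylorRemainder n (-t)‖ ≤ t ^ n / n.factorial := by
  simpa [abs_of_nonneg ht] using norm_expTaylorRemainder_le (z := -t) (by simpa using ht) n

lemma norm_resolventProfile_le {t : ℝ} (ht : 0 ≤ t) : ‖resolventProfile t‖ ≤ t ^ 6 / 360 := by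
  have hI := norm_expTaylorRemainder_I_mul_le t 6
  have hneg := norm_expTaylorRemainder_neg_le ht 6
  rw [abs_of_nonneg ht] at hI
  calc ‖resolventProfile t‖ ≤ ‖I * expTaylorRemainder 6 (I * t)‖ + ‖expTaylorRemainder 6 (-t)‖ :=
        norm_sub_le _ _
    _ ≤ t ^ 6 / Nat.factorial 6 + t ^ 6 / Nat.factorial 6 := by
        rw [norm_mul, norm_I, one_mul]
        gcongr
    _ = t ^ 6 / 360 := by norm_num [Nat.factorial]; ring

lemma norm_resolventProfileDeriv_le {t : ℝ} (ht : 0 ≤ t) :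
    ‖resolventProfileDeriv t‖ ≤ t ^ 5 / 60 := by
  have hI := norm_expTaylorRemainder_I_mul_le t 5
  have hneg := norm_expTaylorRemainder_neg_le ht 5
  rw [abs_of_nonneg ht] at hI
  calc _ ≤ t ^ 5 / Nat.factorial 5 + t ^ 5 / Nat.factorial 5 :=
        (norm_sub_le _ _).trans (add_le_add hneg hI)
    _ = t ^ 5 / 60 := by norm_num [Nat.factorial]; ring

lemma norm_four_mul_ofReal_pow {μ : ℝ} (hμ : 0 < μ) (n : ℕ) : ‖4 * (μ : ℂ) ^ n‖ = 4 * μ ^ n := by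
  simp [abs_of_pos hμ]

lemma norm_resolventError_le {μ : ℝ} (hμ : 0 < μ) (x y : ℝ) :
    ‖resolventError μ x y‖ ≤ μ ^ 3 * |x - y| ^ 6 := by
  have hμr : 0 ≤ μ * |x - y| := by positivity
  rw [resolventError_eq hμ.ne', norm_div, norm_four_mul_ofReal_pow hμ, div_le_iff₀ (by positivity)]
  calc ‖resolventProfile ↑(μ * |x - y|)‖ ≤ (μ * |x - y|) ^ 6 / 360 := norm_resolventProfile_le hμr
    _ ≤ 4 * (μ * |x - y|) ^ 6 := by linarith [pow_nonneg hμr 6]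
    _ = μ ^ 3 * |x - y| ^ 6 * (4 * μ ^ 3) := by ring

lemma hasDerivAt_resolventError {μ : ℝ} (hμ : 0 < μ) (x y : ℝ) :
    HasDerivAt (fun μ' => resolventError μ' x y)
      ((μ * |x - y| * resolventProfileDeriv ↑(μ * |x - y|) - 3 * resolventProfile ↑(μ * |x - y|)) /
        (4 * (μ : ℂ) ^ 4)) μ := by
  have hμ' : (μ : ℂ) ≠ 0 := ofReal_ne_zero.2 hμ.ne'
  have hnum : HasDerivAt (fun μ : ℝ => resolventProfile ↑(μ * |x - y|))
      (resolventProfileDeriv ↑(μ * |x - y|) * |x - y|) μ := by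
    have hline : HasDerivAt (fun μ : ℝ => ((μ * |x - y| : ℝ) : ℂ)) ((|x - y| : ℝ) : ℂ) μ := by
      simpa using ((hasDerivAt_id μ).mul_const |x - y|).ofReal_comp
    exact (hasDerivAt_resolventProfile _).comp μ hline
  have hden : HasDerivAt (fun μ : ℝ => 4 * (μ : ℂ) ^ 3) (4 * (3 * (μ : ℂ) ^ 2)) μ := by
    simpa using ((hasDerivAt_id μ).ofReal_comp.pow 3).const_mul (4 : ℂ)
  have hquot := hnum.div hden (by simpa using hμ')
  refine (hquot.congr_of_eventuallyEq ?_).congr_deriv ?_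
  · filter_upwards [eventually_gt_nhds hμ] with t ht using resolventError_eq ht.ne' x y
  · push_cast
    field_simp

lemma norm_deriv_resolventError_le {μ : ℝ} (hμ : 0 < μ) (x y : ℝ) :
    ‖deriv (fun μ' => resolventError μ' x y) μ‖ ≤ μ ^ 2 * |x - y| ^ 6 := by
  have hμr : 0 ≤ μ * |x - y| := by positivity
  rw [(hasDerivAt_resolventError hμ x y).deriv, norm_div, norm_four_mul_ofReal_pow hμ,
    div_le_iff₀ (by positivity)]
  have hP := norm_resolventProfile_le hμr
  have hP' := norm_resolventProfileDeriv_le hμr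
  calc _ ≤ μ * |x - y| * ‖resolventProfileDeriv ↑(μ * |x - y|)‖ +
          3 * ‖resolventProfile ↑(μ * |x - y|)‖ := by
        refine (norm_sub_le _ _).trans_eq ?_
        simp [abs_of_pos hμ]
    _ ≤ μ * |x - y| * ((μ * |x - y|) ^ 5 / 60) + 3 * ((μ * |x - y|) ^ 6 / 360) := by gcongr
    _ ≤ 4 * (μ * |x - y|) ^ 6 := by nlinarith [pow_nonneg hμr 6]
    _ = μ ^ 2 * |x - y| ^ 6 * (4 * μ ^ 4) := by ring

theorem stmt12_general
    (V : ℝ → ℝ)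
    (β C₀ : ℝ) (hβ : 13 < β) (hC₀ : 0 < C₀)
    (hV_decay : ∀ x : ℝ, |V x| ≤ C₀ * (1 + |x|) ^ (-β))
    (v : ℝ → ℝ) (hv : ∀ x, v x = Real.sqrt |V x|) :
    ∃ C : ℝ, 0 < C ∧
      ∀ μ : ℝ, 0 < μ →
        (∫⁻ x : ℝ, ∫⁻ y : ℝ,
            (‖(v x : ℂ) * resolventError μ x y * (v y : ℂ)‖₊ : ℝ≥0∞) ^ 2) ≤
          ENNReal.ofReal ((C * μ ^ 3) ^ 2) ∧
        (∫⁻ x : ℝ, ∫⁻ y : ℝ,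
            (‖(v x : ℂ) * deriv (fun μ' : ℝ => resolventError μ' x y) μ * (v y : ℂ)‖₊ : ℝ≥0∞) ^ 2) ≤
          ENNReal.ofReal ((C * μ ^ 2) ^ 2) := by
  set J := ∫ t, C₀ * (1 + |t|) ^ (((2 * 6 : ℕ) : ℝ) - β)
  have hβ' : 2 * ((6 : ℕ) : ℝ) + 1 < β := by norm_num; linarith
  have hHS {K : ℝ → ℝ → ℂ} {A : ℝ} (hA : 0 ≤ A) (hK : ∀ x y, ‖K x y‖ ≤ A * |x - y| ^ 6) :
      ∫⁻ x, ∫⁻ y, (‖(v x : ℂ) * K x y * (v y : ℂ)‖₊ : ℝ≥0∞) ^ 2 ≤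
        ENNReal.ofReal (((J + 1) * A) ^ 2) :=
    (lintegral_sq_enorm_kernel_le hβ' hC₀.le hV_decay hv hA hK).trans
      (ENNReal.ofReal_le_ofReal (by gcongr; linarith))
  exact ⟨J + 1, by positivity, fun μ hμ => ⟨hHS (by positivity) (norm_resolventError_le hμ),
    hHS (by positivity) (norm_deriv_resolventError_le hμ)⟩⟩

/-- Lemma 3.1, regular case: if `|V(x)| ≤ C₀ (1+|x|)^{-β}` with `β > 13`
and `v = |V|^{1/2}`, then the Hilbert–Schmidt norm of `v E(μ) v` is `O(μ³)` and that of
`v ∂_μE(μ) v` is `O(μ²)`: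
`(∬ |v(x)E(μ;x,y)v(y)|² dxdy)^{1/2} ≤ C μ³` and
`(∬ |v(x)∂_μE(μ;x,y)v(y)|² dxdy)^{1/2} ≤ C μ²`. -/
theorem stmt12
    (V : ℝ → ℝ) (hV_meas : Measurable V)
    (β C₀ : ℝ) (hβ : 13 < β) (hC₀ : 0 < C₀)
    (hV_decay : ∀ x : ℝ, |V x| ≤ C₀ * (1 + |x|) ^ (-β))
    (v : ℝ → ℝ) (hv : ∀ x, v x = Real.sqrt |V x|) :
    ∃ C : ℝ, 0 < C ∧
      ∀ μ : ℝ, 0 < μ →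
        (∫⁻ x : ℝ, ∫⁻ y : ℝ,
            (‖(v x : ℂ) * resolventError μ x y * (v y : ℂ)‖₊ : ℝ≥0∞) ^ 2) ≤
          ENNReal.ofReal ((C * μ ^ 3) ^ 2) ∧
        (∫⁻ x : ℝ, ∫⁻ y : ℝ,
            (‖(v x : ℂ) * deriv (fun μ' : ℝ => resolventError μ' x y) μ * (v y : ℂ)‖₊ : ℝ≥0∞) ^ 2) ≤
          ENNReal.ofReal ((C * μ ^ 2) ^ 2) :=
  stmt12_general V β C₀ hβ hC₀ hV_decay v hv
end
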